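/- Let a, b be real numbers and, for real t > 0, let f(t) = t^{2+iπ/2} + (1 + (π/4)i)·( t^{1+iπ/2} + (a + b(π/4)i)·t^{iπ/2} ). Then as t → ∞, |f(t)| = t² + t + a − (π²/16)b + π²/32 + O(1/t); precisely, there exist constants A > 0 and t₀ > 0 such that for all real t ≥ t₀, | |f(t)| − t² − t − a + (π²/16)b − π²/32 | ≤ A/t. -/

import Mathlib

open Real

/-- `f(t) = t^{2+iπ/2} + (1 + (π/4)i)·(t^{1+iπ/2} + (a + b(π/4)i)·t^{iπ/2})`. -/
noncomputable def f (a b t : ℝ) : ℂ :=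
  (t : ℂ) ^ (2 + Complex.I * (π : ℂ)/2)
    + (1 + (π : ℂ)/4 * Complex.I) *
        ((t : ℂ) ^ (1 + Complex.I * (π : ℂ)/2)
          + ((a : ℂ) + (b : ℂ) * (π : ℂ)/4 * Complex.I) * (t : ℂ) ^ (Complex.I * (π : ℂ)/2))

/-!
Since `t ^ (iπ/2)` has modulus one and `f(t) = t ^ (iπ/2) · (X + iY)` with `X = t² + t + a - (π²/16) b`
and `Y = (π/4)(t + a + b)`, we get `‖f(t)‖ = √(X² + Y²)`. Shifting `X` by `π²/32` is what cancels the
`t²` term of `Y²`: with `v = X + π²/32` one has `X² + Y² = v² + d` where `d` is affine in `t`, and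
`|√(v² + d) - v| ≤ |d| / v = O(t / t²)`.
-/

lemma abs_sqrt_sq_add_sub_le {v d : ℝ} (hv : 0 < v) (hd : 0 ≤ v ^ 2 + d) :
    |√(v ^ 2 + d) - v| ≤ |d| / v := by
  have hsum : 0 < √(v ^ 2 + d) + v := by positivity
  have hdiff : √(v ^ 2 + d) - v = d / (√(v ^ 2 + d) + v) := by
    rw [eq_div_iff hsum.ne']
    nlinarith [sq_sqrt hd]
  rw [hdiff, abs_div, abs_of_pos hsum]
  exact div_le_div_of_nonneg_left (abs_nonneg d) hv (by linarith [sqrt_nonneg (v ^ 2 + d)])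

lemma abs_mul_add_le_mul {p q t : ℝ} (ht : 1 ≤ t) : |p * t + q| ≤ (|p| + |q|) * t := by
  calc |p * t + q| ≤ |p| * t + |q| := by
        simpa [abs_mul, abs_of_pos (by linarith : (0 : ℝ) < t)] using abs_add_le (p * t) q
    _ ≤ (|p| + |q|) * t := by nlinarith [abs_nonneg q]

lemma f_eq_cpow_mul (a b : ℝ) {t : ℝ} (ht : 0 < t) :
    f a b t = (t : ℂ) ^ (Complex.I * π / 2) *
      ((t ^ 2 + t + a - π ^ 2 / 16 * b : ℝ) + (π / 4 * (t + a + b) : ℝ) * Complex.I) := by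
  have ht0 : (t : ℂ) ≠ 0 := by exact_mod_cast ht.ne'
  have h2 : (t : ℂ) ^ (2 + Complex.I * π / 2) = t ^ 2 * t ^ (Complex.I * π / 2) := by
    rw [Complex.cpow_add _ _ ht0, ← Complex.cpow_natCast]; norm_num
  have h1 : (t : ℂ) ^ (1 + Complex.I * π / 2) = t * t ^ (Complex.I * π / 2) := by
    rw [Complex.cpow_add _ _ ht0, Complex.cpow_one]
  rw [f, h2, h1]
  push_cast
  ring_nf
  rw [Complex.I_sq]
  ring

lemma norm_f_eq_sqrt (a b : ℝ) {t : ℝ} (ht : 0 < t) :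
    ‖f a b t‖ = √((t ^ 2 + t + a - π ^ 2 / 16 * b) ^ 2 + (π / 4 * (t + a + b)) ^ 2) := by
  rw [f_eq_cpow_mul a b ht, norm_mul, Complex.norm_cpow_eq_rpow_re_of_pos ht,
    Complex.norm_add_mul_I]
  simp

theorem abs_f_asymptotics (a b : ℝ) :
    ∃ A > (0 : ℝ), ∃ t₀ > (0 : ℝ), ∀ t : ℝ, t ≥ t₀ →
      |‖f a b t‖ - t^2 - t - a + (π^2/16) * b - π^2/32| ≤ A / t := by
  set p := 2 * a + 2 * b - 1
  set q := (a + b) ^ 2 - a + π ^ 2 / 16 * b - π ^ 2 / 64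
  set K := π ^ 2 / 16 * (|p| + |q|)
  refine ⟨K + 1, by positivity, max 1 (|a| + π ^ 2 / 16 * |b|), by positivity, fun t ht => ?_⟩
  have ht1 : 1 ≤ t := le_of_max_le_left ht
  have ht0 : 0 < t := by linarith
  set v := t ^ 2 + t + a - π ^ 2 / 16 * b + π ^ 2 / 32
  set d := π ^ 2 / 16 * (p * t + q)
  have hv : t ^ 2 ≤ v := by
    have hab := le_of_max_le_right ht
    have hb : π ^ 2 / 16 * b ≤ π ^ 2 / 16 * |b| := by gcongr; exact le_abs_self b
    simp only [v]
    linarith [neg_abs_le a, sq_nonneg π]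
  have hnorm_sq : (t ^ 2 + t + a - π ^ 2 / 16 * b) ^ 2 + (π / 4 * (t + a + b)) ^ 2 = v ^ 2 + d := by
    ring
  have hd : |d| ≤ K * t := by
    rw [abs_mul, abs_of_pos (by positivity : (0 : ℝ) < π ^ 2 / 16), mul_assoc]
    exact mul_le_mul_of_nonneg_left (abs_mul_add_le_mul ht1) (by positivity)
  calc |‖f a b t‖ - t^2 - t - a + (π^2/16) * b - π^2/32| = |√(v ^ 2 + d) - v| := by
        rw [norm_f_eq_sqrt a b ht0, hnorm_sq]; congr 1; simp only [v]; ring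
    _ ≤ |d| / v :=
        abs_sqrt_sq_add_sub_le ((pow_pos ht0 2).trans_le hv) (by rw [← hnorm_sq]; positivity)
    _ ≤ K * t / t ^ 2 := div_le_div₀ ((abs_nonneg d).trans hd) hd (by positivity) hv
    _ = K / t := by field_simp
    _ ≤ (K + 1) / t := by gcongr; linarith
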